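/- For every integer n ≥ 1 and every i ∈ {1,…,n}, with x_j = cos((2j−1)π/(2n)) for j = 1,…,n, one has ∏_{j∈{1,…,n}, j≠i} (x_i − x_j) = (−1)^{i−1} · 2^{1−n} · n / sin((2i−1)π/(2n)). -/

import Mathlib

/-- The `j`-th Chebyshev point of degree `n`: `x_j = cos((2j-1)π/(2n))`. -/
noncomputable def chebPt (n j : ℕ) : ℝ :=
  Real.cos ((2 * (j : ℝ) - 1) * Real.pi / (2 * (n : ℝ)))

/-!
The points `x_j` are the roots of `T_n`, which has leading coefficient `2^(n-1)`, so
`T_n = 2^(n-1) ∏_j (X - x_j)` and `T_n'(x_i) = 2^(n-1) ∏_{j ≠ i} (x_i - x_j)`. On the other hand,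
with `x = cos θ`, `T_n'(cos θ) = n U_{n-1}(cos θ) = n sin(nθ) / sin θ`, and `sin(nθ_i) = (-1)^(i-1)`.
-/

open Polynomial Polynomial.Chebyshev Real Finset

namespace Polynomial

variable {R ι : Type*} [CommRing R] [IsDomain R] {p : R[X]} {s : Finset ι} {v : ι → R}

theorem eq_C_leadingCoeff_mul_nodal (hvs : Set.InjOn v s) (hdeg : p.degree = #s)
    (hroots : ∀ i ∈ s, p.eval (v i) = 0) : p = C p.leadingCoeff * Lagrange.nodal s v := by
  have hp : p ≠ 0 := by
    rintro rfl
    simp at hdeg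
  refine eq_of_degree_le_of_eval_index_eq s hvs hdeg.le ?_ ?_ fun i hi => ?_
  · rw [degree_C_mul (leadingCoeff_ne_zero.mpr hp), Lagrange.degree_nodal, hdeg]
  · rw [leadingCoeff_mul, leadingCoeff_C, Lagrange.nodal_monic.leadingCoeff, mul_one]
  · rw [eval_mul, Lagrange.eval_nodal_at_node hi, mul_zero, hroots i hi]

theorem eval_derivative_eq_leadingCoeff_mul_prod_erase [DecidableEq ι] (hvs : Set.InjOn v s)
    (hdeg : p.degree = #s) (hroots : ∀ i ∈ s, p.eval (v i) = 0) {i : ι} (hi : i ∈ s) :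
    (derivative p).eval (v i) = p.leadingCoeff * ∏ j ∈ s.erase i, (v i - v j) := by
  conv_lhs => rw [eq_C_leadingCoeff_mul_nodal hvs hdeg hroots]
  rw [derivative_C_mul, eval_mul, eval_C, Lagrange.eval_nodal_derivative_eval_node_eq hi,
    Lagrange.eval_nodal]

end Polynomial

noncomputable def chebAngle (n j : ℕ) : ℝ :=
  (2 * (j : ℝ) - 1) * π / (2 * (n : ℝ))

theorem chebPt_eq_cos_chebAngle (n j : ℕ) : chebPt n j = cos (chebAngle n j) := rfl

section ChebyshevPoints

variable {n j : ℕ}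

theorem chebAngle_mem_Ioo (hj : j ∈ Icc 1 n) : chebAngle n j ∈ Set.Ioo 0 π := by
  obtain ⟨hj1, hjn⟩ := mem_Icc.mp hj
  have hj1' : (1 : ℝ) ≤ j := by exact_mod_cast hj1
  have hjn' : (j : ℝ) ≤ n := by exact_mod_cast hjn
  have hn : (0 : ℝ) < 2 * n := by linarith
  rw [chebAngle, Set.mem_Ioo, div_lt_iff₀ hn]
  exact ⟨div_pos (mul_pos (by linarith) pi_pos) hn, by nlinarith [pi_pos]⟩

theorem natCast_mul_chebAngle (hj : j ∈ Icc 1 n) :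
    (n : ℝ) * chebAngle n j = ((j - 1 : ℕ) : ℝ) * π + π / 2 := by
  obtain ⟨hj1, hjn⟩ := mem_Icc.mp hj
  have hn : (n : ℝ) ≠ 0 := by
    norm_cast
    omega
  rw [chebAngle, Nat.cast_sub hj1]
  field_simp
  ring

theorem chebPt_injOn : Set.InjOn (chebPt n) (Icc 1 n) := by
  intro j hj k hk hjk
  have hθ := injOn_cos (Set.Ioo_subset_Icc_self (chebAngle_mem_Ioo hj))
    (Set.Ioo_subset_Icc_self (chebAngle_mem_Ioo hk)) hjk
  have hn : (n : ℝ) ≠ 0 := by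
    have := (mem_Icc.mp hj).1.trans (mem_Icc.mp hj).2
    norm_cast
    omega
  have : (j : ℝ) = k := by
    simpa [chebAngle, hn, pi_ne_zero] using hθ
  exact_mod_cast this

theorem eval_T_chebPt (hj : j ∈ Icc 1 n) : (T ℝ n).eval (chebPt n j) = 0 := by
  rw [chebPt_eq_cos_chebAngle, T_real_cos, Int.cast_natCast, natCast_mul_chebAngle hj,
    cos_add_pi_div_two, sin_nat_mul_pi, neg_zero]

theorem eval_derivative_T_chebPt (hj : j ∈ Icc 1 n) :
    (derivative (T ℝ n)).eval (chebPt n j) * sin (chebAngle n j) = n * (-1) ^ (j - 1) := by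
  have hU := U_real_cos (chebAngle n j) ((n : ℤ) - 1)
  rw [Int.cast_sub, Int.cast_natCast, Int.cast_one, sub_add_cancel, natCast_mul_chebAngle hj,
    sin_add_pi_div_two, cos_nat_mul_pi] at hU
  rw [T_derivative_eq_U, eval_mul, eval_intCast, Int.cast_natCast, chebPt_eq_cos_chebAngle,
    mul_assoc, hU]

end ChebyshevPoints

theorem stmt_3_general (n : ℕ) (i : ℕ) (hi : i ∈ Finset.Icc 1 n) :
    ∏ j ∈ (Finset.Icc 1 n).erase i, (chebPt n i - chebPt n j) =
      (-1 : ℝ) ^ (i - 1) * (2 : ℝ) ^ (1 - (n : ℤ)) * n /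
        Real.sin ((2 * (i : ℝ) - 1) * Real.pi / (2 * (n : ℝ))) := by
  have hn : 1 ≤ n := (mem_Icc.mp hi).1.trans (mem_Icc.mp hi).2
  have hdeg : (T ℝ n).degree = #(Icc 1 n) := by simp
  have hderiv := eval_derivative_eq_leadingCoeff_mul_prod_erase chebPt_injOn hdeg
    (fun j hj => eval_T_chebPt hj) hi
  have hsin : sin (chebAngle n i) ≠ 0 :=
    (sin_pos_of_mem_Ioo (chebAngle_mem_Ioo hi)).ne'
  have hpow : (2 : ℝ) ^ (1 - (n : ℤ)) = ((2 : ℝ) ^ (n - 1))⁻¹ := by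
    rw [← zpow_natCast, ← zpow_neg, Nat.cast_sub hn, Nat.cast_one, neg_sub]
  have hprod := eval_derivative_T_chebPt hi
  rw [hderiv, leadingCoeff_T, Int.natAbs_natCast] at hprod
  change _ = _ / sin (chebAngle n i)
  rw [hpow, eq_div_iff hsin]
  field_simp
  linear_combination hprod

/-- For `n ≥ 1` and `i ∈ {1,…,n}`,
`∏_{j ≠ i} (x_i - x_j) = (-1)^{i-1} · 2^{1-n} · n / sin((2i-1)π/(2n))`. -/
theorem stmt_3 (n : ℕ) (hn : 1 ≤ n) (i : ℕ) (hi : i ∈ Finset.Icc 1 n) :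
    ∏ j ∈ (Finset.Icc 1 n).erase i, (chebPt n i - chebPt n j) =
      (-1 : ℝ) ^ (i - 1) * (2 : ℝ) ^ (1 - (n : ℤ)) * n /
        Real.sin ((2 * (i : ℝ) - 1) * Real.pi / (2 * (n : ℝ))) :=
  stmt_3_general n i hi
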